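/- The order ▷_ℓ is finitely branching: for every term or sequence a, the set {b : a ▷_ℓ b} is finite (up to the relevant syntactic identifications). -/

import Mathlib

/-- First-order terms over signature `F` and variables `V`. -/
inductive Trm (F V : Type) where
  | var : V → Trm F V
  | fn : F → List (Trm F V) → Trm F V

/-- `SSub s t` : `t` is a strict subterm of `s`. -/
inductive SSub {F V : Type} : Trm F V → Trm F V → Prop where
  | arg {f ts t} : t ∈ ts → SSub (Trm.fn f ts) t
  | trans {f ts s t} : s ∈ ts → SSub s t → SSub (Trm.fn f ts) t

/-- Reflexive closure of a relation, used for product extensions. -/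
def EqOr {α : Type} (r : α → α → Prop) (a b : α) : Prop := a = b ∨ r a b

/-- Product extension of a relation on lists: componentwise equal-or-smaller,
with at least one component strictly smaller. -/
def ProdExtL {α : Type} (r : α → α → Prop) (xs ys : List α) : Prop :=
  List.Forall₂ (EqOr r) xs ys ∧
    ∃ i, ∃ (h₁ : i < xs.length) (h₂ : i < ys.length), r xs[i] ys[i]

/-- Elements compared by `▷_ℓ`: terms (inl) or sequences of terms (inr). -/
abbrev TS (F V : Type) := Trm F V ⊕ List (Trm F V)

/-- Identification of a term with the singleton sequence. -/
def toL {F V : Type} : TS F V → List (Trm F V) := Sum.elim (fun t => [t]) id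

mutual
  /-- The auxiliary order `▷_ℓ` (Definition of `poel`) on terms and sequences,
  induced by a precedence `prec` and the width bound `ℓ`. -/
  inductive Poel {F V : Type} (prec : F → F → Prop) (ℓ : ℕ) : TS F V → TS F V → Prop where
    /- clause (1): precedence descent to strict subterms, width at most ℓ -/
    | ia {f g : F} {ss ts : List (Trm F V)} :
        prec f g → (∀ t ∈ ts, SSub (Trm.fn f ss) t) → ts.length ≤ ℓ →
        Poel prec ℓ (Sum.inl (Trm.fn f ss)) (Sum.inl (Trm.fn g ts))
    /- clause (2): same symbol, product extension of the strict-subterm order -/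
    | tsc {f : F} {ss ts : List (Trm F V)} :
        ProdExtL SSub ss ts →
        Poel prec ℓ (Sum.inl (Trm.fn f ss)) (Sum.inl (Trm.fn f ts))
    /- clause (3): descent from a term to a sequence of at most ℓ smaller terms -/
    | ialst {f : F} {ss ts : List (Trm F V)} :
        (∀ t ∈ ts, Poel prec ℓ (Sum.inl (Trm.fn f ss)) (Sum.inl t)) → ts.length ≤ ℓ →
        Poel prec ℓ (Sum.inl (Trm.fn f ss)) (Sum.inr ts)
    /- clause (4): sequences, splitting `ts = b₁ ++ ⋯ ++ b_k` with
       `⟨s₁,…,s_k⟩` greater than `⟨b₁,…,b_k⟩` in the product extension of `▷_ℓ` -/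
    | ms {ss ts : List (Trm F V)} (bs : List (TS F V)) :
        ts = (bs.map toL).flatten →
        PoelProd prec ℓ (ss.map Sum.inl) bs →
        Poel prec ℓ (Sum.inr ss) (Sum.inr ts)

  /-- Product extension of `▷_ℓ`: componentwise equal-or-smaller with at
  least one strict decrease. -/
  inductive PoelProd {F V : Type} (prec : F → F → Prop) (ℓ : ℕ) :
      List (TS F V) → List (TS F V) → Prop where
    | strict {a b as bs} : Poel prec ℓ a b → PoelGE prec ℓ as bs →
        PoelProd prec ℓ (a :: as) (b :: bs)
    | cons_eq {a as bs} : PoelProd prec ℓ as bs → PoelProd prec ℓ (a :: as) (a :: bs)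
    | cons_lt {a b as bs} : Poel prec ℓ a b → PoelProd prec ℓ as bs →
        PoelProd prec ℓ (a :: as) (b :: bs)

  /-- Componentwise equal-or-smaller (w.r.t. `▷_ℓ`) lists of equal length. -/
  inductive PoelGE {F V : Type} (prec : F → F → Prop) (ℓ : ℕ) :
      List (TS F V) → List (TS F V) → Prop where
    | nil : PoelGE prec ℓ [] []
    | cons_eq {a as bs} : PoelGE prec ℓ as bs → PoelGE prec ℓ (a :: as) (a :: bs)
    | cons_lt {a b as bs} : Poel prec ℓ a b → PoelGE prec ℓ as bs →
        PoelGE prec ℓ (a :: as) (b :: bs)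
end

/-!
A term `f(s₁, …, sₙ)` can only descend to an application `g(u₁, …, u_k)` with
`k ≤ max ℓ n` and every `uᵢ` a strict subterm of `f(s₁, …, sₙ)`, or to a sequence of at most `ℓ`
such applications; since the signature and the set of strict subterms are finite, there are
finitely many of these. A sequence `⟨s₁, …, sₙ⟩` descends only to flattenings of lists
`⟨b₁, …, bₙ⟩` with each `bᵢ` equal to or below `sᵢ`, and the term case bounds the choices of
each `bᵢ`.
-/

namespace List

theorem finite_setOf_length_le_of_forall_mem {α : Type*} {s : Set α} (hs : s.Finite) (n : ℕ) :
    {l : List α | l.length ≤ n ∧ ∀ x ∈ l, x ∈ s}.Finite := by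
  have := hs.to_subtype
  refine ((finite_length_le s n).image (map Subtype.val)).subset ?_
  rintro l ⟨hn, hl⟩
  lift l to List s using hl
  exact ⟨l, by simpa using hn, rfl⟩

theorem Forall₂.exists_mem_of_mem_right {α β : Type*} {R : α → β → Prop} {l₁ : List α}
    {l₂ : List β} (h : Forall₂ R l₁ l₂) {b : β} (hb : b ∈ l₂) : ∃ a ∈ l₁, R a b := by
  induction h with
  | nil => cases hb
  | @cons a b' l₁ l₂ hab _ ih =>
    rcases mem_cons.mp hb with rfl | hb
    · exact ⟨a, mem_cons_self, hab⟩
    · obtain ⟨a', ha', hr⟩ := ih hb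
      exact ⟨a', mem_cons_of_mem _ ha', hr⟩

theorem finite_setOf_forall₂ {α β : Type*} {R : α → β → Prop} (hR : ∀ a, {b | R a b}.Finite)
    (l : List α) : {l' | Forall₂ R l l'}.Finite := by
  refine (finite_setOf_length_le_of_forall_mem
    (l.finite_toSet.biUnion fun a _ => hR a) l.length).subset ?_
  intro l' h
  refine ⟨h.length_eq.ge, fun b hb => ?_⟩
  obtain ⟨a, ha, hab⟩ := h.exists_mem_of_mem_right hb
  exact Set.mem_biUnion ha hab

end List

section

variable {F V : Type}

theorem Trm.finite_setOf_ssub : ∀ t : Trm F V, {s | SSub t s}.Finite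
  | .var _ => Set.finite_empty.subset fun _ h => nomatch h
  | .fn f ts => by
    refine (ts.finite_toSet.biUnion fun t ht =>
      (Trm.finite_setOf_ssub t).insert t).subset ?_
    intro s h
    cases h with
    | arg hs => exact Set.mem_biUnion hs (Set.mem_insert s _)
    | trans ht hs => exact Set.mem_biUnion ht (Set.mem_insert_of_mem _ hs)
termination_by t => sizeOf t
decreasing_by
  have := List.sizeOf_lt_of_mem ht
  simp only [Trm.fn.sizeOf_spec]
  omega

def Trm.appsOver (w : ℕ) (S : Set (Trm F V)) : Set (Trm F V) :=
  {u | ∃ g us, u = Trm.fn g us ∧ us.length ≤ w ∧ ∀ x ∈ us, x ∈ S}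

theorem Trm.finite_appsOver [Finite F] (w : ℕ) {S : Set (Trm F V)} (hS : S.Finite) :
    (Trm.appsOver w S).Finite := by
  refine (Set.finite_univ.image2 Trm.fn
    (List.finite_setOf_length_le_of_forall_mem hS w)).subset ?_
  rintro u ⟨g, us, rfl, hlen, hus⟩
  exact Set.mem_image2_of_mem (Set.mem_univ g) ⟨hlen, hus⟩

variable {prec : F → F → Prop} {ℓ : ℕ}

theorem Poel.mem_appsOver {f : F} {ss : List (Trm F V)} {u : Trm F V}
    (h : Poel prec ℓ (.inl (.fn f ss)) (.inl u)) :
    u ∈ Trm.appsOver (max ℓ ss.length) {s | SSub (.fn f ss) s} := by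
  cases h with
  | ia _ hsub hlen => exact ⟨_, _, rfl, le_max_of_le_left hlen, hsub⟩
  | tsc hext =>
    refine ⟨_, _, rfl, hext.1.length_eq ▸ le_max_right _ _, fun x hx => ?_⟩
    obtain ⟨s, hs, rfl | hsx⟩ := hext.1.exists_mem_of_mem_right hx
    · exact SSub.arg hs
    · exact SSub.trans hs hsx

theorem finite_setOf_poel_inl [Finite F] (t : Trm F V) :
    {b | Poel prec ℓ (.inl t) b}.Finite := by
  cases t with
  | var => exact Set.finite_empty.subset fun _ h => nomatch h
  | fn f ss =>
    have hA := Trm.finite_appsOver (max ℓ ss.length) (Trm.finite_setOf_ssub (.fn f ss))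
    refine ((hA.image Sum.inl).union
      ((List.finite_setOf_length_le_of_forall_mem hA ℓ).image Sum.inr)).subset ?_
    rintro (u | ts) h
    · exact Or.inl ⟨u, h.mem_appsOver, rfl⟩
    · cases h with
      | ialst hts hlen => exact Or.inr ⟨ts, ⟨hlen, fun x hx => (hts x hx).mem_appsOver⟩, rfl⟩

theorem PoelGE.forall₂ {as bs : List (TS F V)} :
    PoelGE prec ℓ as bs → List.Forall₂ (EqOr (Poel prec ℓ)) as bs
  | .nil => .nil
  | .cons_eq h => .cons (Or.inl rfl) h.forall₂
  | .cons_lt hab h => .cons (Or.inr hab) h.forall₂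

theorem PoelProd.forall₂ {as bs : List (TS F V)} :
    PoelProd prec ℓ as bs → List.Forall₂ (EqOr (Poel prec ℓ)) as bs
  | .strict hab h => .cons (Or.inr hab) h.forall₂
  | .cons_eq h => .cons (Or.inl rfl) h.forall₂
  | .cons_lt hab h => .cons (Or.inr hab) h.forall₂

theorem finite_setOf_poel_inr [Finite F] (ss : List (Trm F V)) :
    {b | Poel prec ℓ (.inr ss) b}.Finite := by
  have hchoices : {bs | List.Forall₂ (fun s => EqOr (Poel prec ℓ) (.inl s)) ss bs}.Finite :=
    List.finite_setOf_forall₂ (fun s => ((finite_setOf_poel_inl s).insert (.inl s)).subset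
      fun _ h => h.imp_left Eq.symm) ss
  refine (hchoices.image fun bs => .inr (bs.map toL).flatten).subset ?_
  intro b h
  cases h with
  | ms bs hts hprod => exact ⟨bs, List.forall₂_map_left_iff.mp hprod.forall₂, hts ▸ rfl⟩

end

/-- `▷_ℓ` is finitely branching: for every term or sequence `a`, the set
`{b : a ▷_ℓ b}` is finite. -/
theorem poel_finitely_branching {F V : Type} [Finite F] (prec : F → F → Prop)
    (hirr : ∀ f, ¬ prec f f) (htrans : ∀ f g h, prec f g → prec g h → prec f h)
    (ℓ : ℕ) (hℓ : 1 ≤ ℓ) (a : TS F V) :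
    {b | Poel prec ℓ a b}.Finite := by
  cases a with
  | inl t => exact finite_setOf_poel_inl t
  | inr ss => exact finite_setOf_poel_inr ss
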